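/- (Rejection soundness of the derived validator, single step.) Define the invariant Inv between a set v of validation states and a memory s : ℕ → ℤ by: Inv v s iff there exist (vs, cs) ∈ v and an assignment asgn such that asgn satisfies cs and vs^asgn ≡ s. Then for every program p : Prog, all q, c, a : ℤ, all memories s, s', and every set v of validation states: if sstep_p q c s = (a, s') and Inv v s, then there exists v' with vstep_p q a v = some v' and Inv v' s'. -/

import Mathlib

/-- Variables are natural numbers. -/
abbrev Var := ℕ

/-- Binary integer operations: +, −, ×, ÷ (integer division). -/
inductive Op
  | add | sub | mul | div
deriving DecidableEq

def Op.denote : Op → ℤ → ℤ → ℤ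
  | .add => (· + ·)
  | .sub => (· - ·)
  | .mul => (· * ·)
  | .div => (· / ·)

/-- Symbolic server expressions. -/
inductive SExp
  | const : ℤ → SExp
  | read : ℕ → SExp
  | bin : Op → SExp → SExp → SExp
deriving DecidableEq

/-- Evaluation of a server expression on a memory `s : ℕ → ℤ`, written `e^s`. -/
def SExp.eval (s : ℕ → ℤ) : SExp → ℤ
  | .const z => z
  | .read k => s k
  | .bin op e₁ e₂ => op.denote (e₁.eval s) (e₂.eval s)

/-- Validator expressions. -/
inductive VExp
  | const : ℤ → VExp
  | var : Var → VExp
  | bin : Op → VExp → VExp → VExp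
deriving DecidableEq

/-- Evaluation of a validator expression under an assignment, written `e^asgn`. -/
def VExp.eval (asgn : Var → ℤ) : VExp → ℤ
  | .const z => z
  | .var x => asgn x
  | .bin op e₁ e₂ => op.denote (e₁.eval asgn) (e₂.eval asgn)

/-- Symbolization `e^vs` of a server expression: replace every `read src` by `var (vs src)`. -/
def SExp.symb (vs : ℕ → Var) : SExp → VExp
  | .const z => .const z
  | .read k => .var (vs k)
  | .bin op e₁ e₂ => .bin op (e₁.symb vs) (e₂.symb vs)

/-- Comparison operators for constraints: <, ≤, =. -/
inductive Cmp
  | lt | le | eq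
deriving DecidableEq

def Cmp.holds : Cmp → ℤ → ℤ → Prop
  | .lt => (· < ·)
  | .le => (· ≤ ·)
  | .eq => (· = ·)

/-- A constraint is a triple of two validator expressions and a comparison. -/
structure Constraint where
  lhs : VExp
  cmp : Cmp
  rhs : VExp
deriving DecidableEq

/-- `asgn` satisfies the constraint set `cs`. -/
def Sat (asgn : Var → ℤ) (cs : Finset Constraint) : Prop :=
  ∀ c ∈ cs, c.cmp.holds (c.lhs.eval asgn) (c.rhs.eval asgn)

/-- A variable occurs in a validator expression. -/
def VExp.occurs (x : Var) : VExp → Prop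
  | .const _ => False
  | .var y => y = x
  | .bin _ e₁ e₂ => e₁.occurs x ∨ e₂.occurs x

/-- `x` is fresh for the constraint set `cs`: it occurs in no constraint of `cs`. -/
def FreshCs (x : Var) (cs : Finset Constraint) : Prop :=
  ∀ c ∈ cs, ¬ c.lhs.occurs x ∧ ¬ c.rhs.occurs x

/-- `x` is fresh for `vs : ℕ → Var`. -/
def FreshVs (x : Var) (vs : ℕ → Var) : Prop :=
  ∀ k : ℕ, vs k ≠ x

/-- One more than the largest variable occurring in a validator expression
(a strict upper bound on its variables). -/
def VExp.maxVar : VExp → ℕ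
  | .const _ => 0
  | .var x => x + 1
  | .bin _ e₁ e₂ => max e₁.maxVar e₂.maxVar

def Constraint.maxVar (c : Constraint) : ℕ :=
  max c.lhs.maxVar c.rhs.maxVar

/-- A validation state: a map from addresses to their representing variables
(with finite support, so that fresh variables exist), and a finite set of
constraints. -/
abbrev VState := (ℕ →₀ ℕ) × Finset Constraint

/-- A fixed variable fresh for both `vs` and `cs`. -/
def freshVar (vs : ℕ →₀ ℕ) (cs : Finset Constraint) : Var :=
  max (vs.support.sup ⇑vs) (cs.sup Constraint.maxVar) + 1

/-- The write rule on validation states. -/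
noncomputable def writeV (d : ℕ) (e : SExp) (w : VState) : VState :=
  let x := freshVar w.1 w.2
  (w.1.update d x, insert ⟨VExp.var x, Cmp.eq, e.symb w.1⟩ w.2)

/-- The havoc rule on validation states. -/
noncomputable def havocV (d : ℕ) (w : VState) : VState :=
  (w.1.update d (freshVar w.1 w.2), w.2)

/-- Programs in the `Prog` language. -/
inductive Prog
  | ret
  | write (dst : ℕ) (e : SExp) (p : Prog)
  | branch (e₁ e₂ : SExp) (p₁ p₂ : Prog)

/-- Semantics of `Prog` on integer memories. -/
def evalProg : Prog → (ℕ → ℤ) → (ℕ → ℤ)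
  | .ret, s => s
  | .write d e p, s => evalProg p (Function.update s d (e.eval s))
  | .branch e₁ e₂ p₁ p₂, s =>
      if e₁.eval s ≤ e₂.eval s then evalProg p₁ s else evalProg p₂ s

/-- The symbolic executor on validation states. -/
noncomputable def exec : Prog → VState → Finset VState
  | .ret, w => {w}
  | .write d e p, w => exec p (writeV d e w)
  | .branch e₁ e₂ p₁ p₂, w =>
      exec p₁ (w.1, insert ⟨e₁.symb w.1, Cmp.le, e₂.symb w.1⟩ w.2) ∪
      exec p₂ (w.1, insert ⟨e₂.symb w.1, Cmp.lt, e₁.symb w.1⟩ w.2)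

/-- A constraint set is solvable iff some assignment satisfies it. -/
def Solvable (cs : Finset Constraint) : Prop :=
  ∃ asgn : Var → ℤ, Sat asgn cs

/-- The step function of the server derived from program `p`:
write the choice to address 0 and the query to address 1, run `p`,
and answer with the value at address 1. -/
def sstepP (p : Prog) (q c : ℤ) (s : ℕ → ℤ) : ℤ × (ℕ → ℤ) :=
  let s₃ := evalProg p (Function.update (Function.update s 0 c) 1 q)
  (s₃ 1, s₃)

open Classical in
/-- The step function of the validator derived from program `p`. -/
noncomputable def vstepP (p : Prog) (q a : ℤ) (v : Finset VState) :
    Option (Finset VState) :=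
  let v' : Finset VState := v.biUnion (fun w =>
    let w₂ := writeV 1 (SExp.const q) (havocV 0 w)
    (exec p w₂).biUnion (fun w₃ =>
      let cs₄ := insert ⟨VExp.var (w₃.1 1), Cmp.eq, VExp.const a⟩ w₃.2
      if Solvable cs₄ then {(w₃.1, cs₄)} else ∅))
  if v' = ∅ then none else some v'

/-- The invariant between a set of validation states and a server memory. -/
def InvVS (v : Finset VState) (s : ℕ → ℤ) : Prop :=
  ∃ w ∈ v, ∃ asgn : Var → ℤ, Sat asgn w.2 ∧ ∀ k : ℕ, asgn (w.1 k) = s k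

/-! A symbolic execution step only ever introduces the fresh variable `freshVar vs cs`, which
occurs neither in `cs` nor in the range of `vs`. Hence a model of the state before the step,
updated at that variable to the newly written value, is a model of the state after it; by
induction over the program, some path of the symbolic executor is modelled by the concrete
run, and its final constraint on address `1` is satisfied by that model. -/

structure Models (asgn : Var → ℤ) (w : VState) (s : ℕ → ℤ) : Prop where
  sat : Sat asgn w.2
  agree : ∀ k, asgn (w.1 k) = s k

theorem sat_insert {asgn : Var → ℤ} {c : Constraint} {cs : Finset Constraint} :
    Sat asgn (insert c cs) ↔ c.cmp.holds (c.lhs.eval asgn) (c.rhs.eval asgn) ∧ Sat asgn cs :=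
  Finset.forall_mem_insert _ _ _

theorem VExp.eval_update_of_maxVar_le {e : VExp} {x : Var} (hx : e.maxVar ≤ x)
    (asgn : Var → ℤ) (z : ℤ) : e.eval (Function.update asgn x z) = e.eval asgn := by
  induction e with
  | const => rfl
  | var y =>
    have hyx : y ≠ x := (Nat.lt_of_succ_le hx).ne
    exact Function.update_of_ne hyx z asgn
  | bin op e₁ e₂ ih₁ ih₂ =>
    rw [VExp.maxVar, max_le_iff] at hx
    simp only [VExp.eval, ih₁ hx.1, ih₂ hx.2]

theorem Sat.update {asgn : Var → ℤ} {cs : Finset Constraint} (h : Sat asgn cs) {x : Var}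
    (hx : cs.sup Constraint.maxVar ≤ x) (z : ℤ) : Sat (Function.update asgn x z) cs := by
  intro c hc
  have hcx : max c.lhs.maxVar c.rhs.maxVar ≤ x := (Finset.le_sup hc).trans hx
  rw [max_le_iff] at hcx
  rw [VExp.eval_update_of_maxVar_le hcx.1, VExp.eval_update_of_maxVar_le hcx.2]
  exact h c hc

theorem SExp.eval_symb (e : SExp) (vs : ℕ → Var) (asgn : Var → ℤ) :
    (e.symb vs).eval asgn = e.eval (asgn ∘ vs) := by
  induction e with
  | const => rfl
  | read => rfl
  | bin op e₁ e₂ ih₁ ih₂ => simp only [SExp.symb, SExp.eval, VExp.eval, ih₁, ih₂]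

theorem apply_lt_freshVar (vs : ℕ →₀ ℕ) (cs : Finset Constraint) (k : ℕ) :
    vs k < freshVar vs cs := by
  refine Nat.lt_succ_of_le (le_max_of_le_left ?_)
  by_cases hk : k ∈ vs.support
  · exact Finset.le_sup hk
  · simp [Finsupp.notMem_support_iff.mp hk]

theorem sup_maxVar_lt_freshVar (vs : ℕ →₀ ℕ) (cs : Finset Constraint) :
    cs.sup Constraint.maxVar < freshVar vs cs :=
  Nat.lt_succ_of_le (le_max_right _ _)

namespace Models

variable {asgn : Var → ℤ} {w : VState} {s : ℕ → ℤ}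

theorem eval_symb (h : Models asgn w s) (e : SExp) : (e.symb w.1).eval asgn = e.eval s := by
  rw [SExp.eval_symb]
  exact congrArg (e.eval ·) (funext h.agree)

theorem havocV (h : Models asgn w s) (d : ℕ) (z : ℤ) :
    Models (Function.update asgn (freshVar w.1 w.2) z) (havocV d w) (Function.update s d z) where
  sat := h.sat.update (sup_maxVar_lt_freshVar w.1 w.2).le z
  agree k := by
    by_cases hk : k = d
    · subst hk
      simp [_root_.havocV]
    · simp only [_root_.havocV, Finsupp.coe_update, Function.update_of_ne hk,
        Function.update_of_ne (apply_lt_freshVar w.1 w.2 k).ne, h.agree k]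

/-- `writeV` is `havocV` plus one equation, which the updated model satisfies because the
fresh variable does not occur in `e.symb w.1`. -/
theorem writeV (h : Models asgn w s) (d : ℕ) (e : SExp) :
    Models (Function.update asgn (freshVar w.1 w.2) (e.eval s)) (writeV d e w)
      (Function.update s d (e.eval s)) where
  sat := by
    have hsymb : (e.symb w.1).eval (Function.update asgn (freshVar w.1 w.2) (e.eval s)) =
        e.eval s := by
      rw [SExp.eval_symb, ← h.eval_symb, SExp.eval_symb]
      exact congrArg (e.eval ·)
        (funext fun k => Function.update_of_ne (apply_lt_freshVar w.1 w.2 k).ne _ _)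
    refine sat_insert.mpr ⟨?_, (h.havocV d (e.eval s)).sat⟩
    simp [Cmp.holds, VExp.eval, hsymb]
  agree := (h.havocV d (e.eval s)).agree

theorem insert_constraint (h : Models asgn w s) {c : Constraint}
    (hc : c.cmp.holds (c.lhs.eval asgn) (c.rhs.eval asgn)) :
    Models asgn (w.1, insert c w.2) s :=
  ⟨sat_insert.mpr ⟨hc, h.sat⟩, h.agree⟩

end Models

theorem exists_mem_exec_models (p : Prog) {w : VState} {asgn : Var → ℤ} {s : ℕ → ℤ}
    (h : Models asgn w s) :
    ∃ w₃ ∈ exec p w, ∃ asgn₃, Models asgn₃ w₃ (evalProg p s) := by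
  induction p generalizing w asgn s with
  | ret => exact ⟨w, Finset.mem_singleton_self w, asgn, h⟩
  | write d e p ih => exact ih (h.writeV d e)
  | branch e₁ e₂ p₁ p₂ ih₁ ih₂ =>
    by_cases hle : e₁.eval s ≤ e₂.eval s
    · obtain ⟨w₃, hw₃, asgn₃, h₃⟩ :=
        ih₁ (h.insert_constraint (c := ⟨e₁.symb w.1, .le, e₂.symb w.1⟩)
          (by simpa only [Cmp.holds, h.eval_symb] using hle))
      refine ⟨w₃, Finset.mem_union_left _ hw₃, asgn₃, ?_⟩
      rwa [evalProg, if_pos hle]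
    · obtain ⟨w₃, hw₃, asgn₃, h₃⟩ :=
        ih₂ (h.insert_constraint (c := ⟨e₂.symb w.1, .lt, e₁.symb w.1⟩)
          (by simpa only [Cmp.holds, h.eval_symb] using lt_of_not_ge hle))
      refine ⟨w₃, Finset.mem_union_right _ hw₃, asgn₃, ?_⟩
      rwa [evalProg, if_neg hle]

theorem exists_vstepP_eq_some_of_mem {p : Prog} {q a : ℤ} {v : Finset VState} {w w₃ : VState}
    (hw : w ∈ v) (hw₃ : w₃ ∈ exec p (writeV 1 (.const q) (havocV 0 w)))
    (hsolv : Solvable (insert ⟨.var (w₃.1 1), .eq, .const a⟩ w₃.2)) :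
    ∃ v', vstepP p q a v = some v' ∧
      (w₃.1, insert ⟨.var (w₃.1 1), .eq, .const a⟩ w₃.2) ∈ v' := by
  classical
  have hmem : (w₃.1, insert ⟨.var (w₃.1 1), .eq, .const a⟩ w₃.2) ∈ v.biUnion (fun w =>
      (exec p (writeV 1 (.const q) (havocV 0 w))).biUnion (fun w₃ =>
        if Solvable (insert ⟨.var (w₃.1 1), .eq, .const a⟩ w₃.2)
        then {(w₃.1, insert ⟨.var (w₃.1 1), .eq, .const a⟩ w₃.2)} else ∅)) :=
    Finset.mem_biUnion.mpr ⟨w, hw, Finset.mem_biUnion.mpr ⟨w₃, hw₃, by simp [hsolv]⟩⟩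
  refine ⟨_, ?_, hmem⟩
  simp only [vstepP]
  convert if_neg (Finset.ne_empty_of_mem hmem)

/-- Rejection soundness of the derived validator, single step. -/
theorem derived_validator_sound_step
    (p : Prog) (q c a : ℤ) (s s' : ℕ → ℤ) (v : Finset VState)
    (hs : sstepP p q c s = (a, s')) (hinv : InvVS v s) :
    ∃ v' : Finset VState, vstepP p q a v = some v' ∧ InvVS v' s' := by
  obtain ⟨w, hw, asgn, hsat, hagree⟩ := hinv
  have h₂ := ((Models.mk hsat hagree).havocV 0 c).writeV 1 (.const q)
  obtain ⟨w₃, hw₃, asgn₃, h₃⟩ := exists_mem_exec_models p h₂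
  simp only [sstepP, Prod.mk.injEq] at hs
  obtain ⟨rfl, rfl⟩ := hs
  have h₄ := h₃.insert_constraint (c := ⟨.var (w₃.1 1), .eq, .const _⟩) (h₃.agree 1)
  obtain ⟨v', hv', hmem⟩ := exists_vstepP_eq_some_of_mem hw hw₃ ⟨asgn₃, h₄.sat⟩
  exact ⟨v', hv', _, hmem, asgn₃, h₄.sat, h₄.agree⟩
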